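/- arXiv:2510.15553 — 4 statements merged into one kernel-verified Lean document; each statement's English description precedes it below -/
import Mathlib

section
/- If H is a triangle-free graph whose maximum matching has size m(H) with |V(H)| - 2·m(H) ≥ 2 (i.e., at least two vertices are left unmatched by any maximum matching), then |V(H)| ≤ m(H) + macodeg(H) + 2. -/
open SimpleGraph

variable {V : Type*}

/-- The codegree of two vertices: the number of their common neighbors. -/
noncomputable def codeg (H : SimpleGraph V) (u v : V) : ℕ :=
  Nat.card {x : V // H.Adj u x ∧ H.Adj v x}

/-- The maximum codegree `Δ₂`: the maximum of `codeg` over pairs of distinct vertices. -/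
noncomputable def maxCodeg (H : SimpleGraph V) : ℕ :=
  sSup {n | ∃ u v : V, u ≠ v ∧ codeg H u v = n}

/-- The anti-codegree: the number of vertices distinct from `u, v` adjacent to neither. -/
noncomputable def acodeg (H : SimpleGraph V) (u v : V) : ℕ :=
  Nat.card {x : V // x ≠ u ∧ x ≠ v ∧ ¬H.Adj u x ∧ ¬H.Adj v x}

/-- The maximum anti-codegree over pairs of distinct vertices. -/
noncomputable def macodeg (H : SimpleGraph V) : ℕ :=
  sSup {n | ∃ u v : V, u ≠ v ∧ acodeg H u v = n}

/-- A matching, as a set of pairwise vertex-disjoint edges. -/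
def IsMatchingSet (H : SimpleGraph V) (M : Finset (Sym2 V)) : Prop :=
  (∀ e ∈ M, e ∈ H.edgeSet) ∧ ∀ e ∈ M, ∀ f ∈ M, e ≠ f → ∀ v : V, v ∈ e → v ∉ f

/-- The matching number: maximum size of a matching. -/
noncomputable def matchingNumber (H : SimpleGraph V) : ℕ :=
  sSup {n | ∃ M : Finset (Sym2 V), IsMatchingSet H M ∧ M.card = n}

/-- The clique cover number: the least `n` such that `V` can be partitioned into `n` cliques. -/
noncomputable def cliqueCoverNumber (H : SimpleGraph V) : ℕ :=
  sInf {n | ∃ c : V → Fin n, ∀ u v : V, c u = c v → u = v ∨ H.Adj u v}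

/-- A graph is claw-free if no neighborhood contains three pairwise nonadjacent vertices. -/
def ClawFree (G : SimpleGraph V) : Prop :=
  ∀ v a b c : V, G.Adj v a → G.Adj v b → G.Adj v c →
    a ≠ b → a ≠ c → b ≠ c → G.Adj a b ∨ G.Adj a c ∨ G.Adj b c

/-- Maximum edge-codegree `Δ_e`: maximum codegree over pairs of adjacent vertices. -/
noncomputable def maxEdgeCodeg (G : SimpleGraph V) : ℕ :=
  sSup {n | ∃ u v : V, G.Adj u v ∧ codeg G u v = n}

open Finset in
private lemma extend_matching (H : SimpleGraph V) (M : Finset (Sym2 V)) (hM : IsMatchingSet H M)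
    {u w : V} (hu : ∀ e ∈ M, u ∉ e) (hw : ∀ e ∈ M, w ∉ e) (h : H.Adj u w) :
    ∃ M' : Finset (Sym2 V), IsMatchingSet H M' ∧ M'.card = M.card + 1 := by
  classical
  refine ⟨insert s(u,w) M, ?_⟩
  have hnot : s(u,w) ∉ M := fun hm => hu _ hm (Sym2.mem_mk_left u w)
  refine ⟨⟨?_, ?_⟩, Finset.card_insert_of_notMem hnot⟩
  · intro e he
    rcases Finset.mem_insert.1 he with rfl | he
    · exact H.mem_edgeSet.2 h
    · exact hM.1 e he
  · intro e he f hf hef x hxe hxf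
    rcases Finset.mem_insert.1 he with rfl | he
    · rcases Finset.mem_insert.1 hf with rfl | hf
      · exact hef rfl
      · rcases Sym2.mem_iff.1 hxe with h' | h'
        · exact hu f hf (h' ▸ hxf)
        · exact hw f hf (h' ▸ hxf)
    · rcases Finset.mem_insert.1 hf with rfl | hf
      · rcases Sym2.mem_iff.1 hxf with h' | h'
        · exact hu e he (h' ▸ hxe)
        · exact hw e he (h' ▸ hxe)
      · exact hM.2 e he f hf hef x hxe hxf

open Finset in
private lemma swap_matching (H : SimpleGraph V) (M : Finset (Sym2 V)) (hM : IsMatchingSet H M)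
    {u v x y : V} (hu : ∀ e ∈ M, u ∉ e) (hv : ∀ e ∈ M, v ∉ e) (huv : u ≠ v)
    (hxy : s(x,y) ∈ M) (hux : H.Adj u x) (hvy : H.Adj v y) :
    ∃ M' : Finset (Sym2 V), IsMatchingSet H M' ∧ M'.card = M.card + 1 := by
  classical
  have hxyadj : H.Adj x y := H.mem_edgeSet.1 (hM.1 _ hxy)
  have hxny : x ≠ y := hxyadj.ne
  have hux' : u ≠ x := fun h => hu _ hxy (h ▸ Sym2.mem_mk_left x y)
  have huy' : u ≠ y := fun h => hu _ hxy (h ▸ Sym2.mem_mk_right x y)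
  have hvx' : v ≠ x := fun h => hv _ hxy (h ▸ Sym2.mem_mk_left x y)
  have hvy' : v ≠ y := fun h => hv _ hxy (h ▸ Sym2.mem_mk_right x y)
  -- any vertex of s(x,y) appears in no other edge of M
  have hxonly : ∀ f ∈ M, f ≠ s(x,y) → x ∉ f := fun f hf hne =>
    hM.2 _ hxy f hf (Ne.symm hne) x (Sym2.mem_mk_left x y)
  have hyonly : ∀ f ∈ M, f ≠ s(x,y) → y ∉ f := fun f hf hne =>
    hM.2 _ hxy f hf (Ne.symm hne) y (Sym2.mem_mk_right x y)
  set M' : Finset (Sym2 V) := insert s(u,x) (insert s(v,y) (M.erase s(x,y))) with hM'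
  have hne_uv_edges : s(u,x) ≠ s(v,y) := by
    intro h
    rcases Sym2.eq_iff.1 h with ⟨h1, _⟩ | ⟨h1, _⟩
    · exact huv h1
    · exact huy' h1
  have huxne : s(u,x) ∉ insert s(v,y) (M.erase s(x,y)) := by
    intro h
    rcases Finset.mem_insert.1 h with h | h
    · exact hne_uv_edges h
    · exact hu _ (Finset.mem_of_mem_erase h) (Sym2.mem_mk_left u x)
  have hvyne : s(v,y) ∉ M.erase s(x,y) := fun h =>
    hv _ (Finset.mem_of_mem_erase h) (Sym2.mem_mk_left v y)
  have hmemM' : ∀ e ∈ M', e = s(u,x) ∨ e = s(v,y) ∨ (e ∈ M ∧ e ≠ s(x,y)) := by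
    intro e he
    rcases Finset.mem_insert.1 he with rfl | he
    · exact Or.inl rfl
    rcases Finset.mem_insert.1 he with rfl | he
    · exact Or.inr (Or.inl rfl)
    · exact Or.inr (Or.inr ⟨Finset.mem_of_mem_erase he, Finset.ne_of_mem_erase he⟩)
  refine ⟨M', ⟨?_, ?_⟩, ?_⟩
  · intro e he
    rcases hmemM' e he with rfl | rfl | ⟨he, _⟩
    · exact H.mem_edgeSet.2 hux
    · exact H.mem_edgeSet.2 hvy
    · exact hM.1 e he
  · -- disjointness
    intro e he f hf hef z hze hzf
    have key : ∀ g, (g = s(u,x) ∨ g = s(v,y) ∨ (g ∈ M ∧ g ≠ s(x,y))) → z ∈ g →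
        ∀ g', (g' = s(u,x) ∨ g' = s(v,y) ∨ (g' ∈ M ∧ g' ≠ s(x,y))) → g ≠ g' → z ∉ g' := by
      intro g hg hzg g' hg' hgg' hzg'
      rcases hg with rfl | rfl | ⟨hgM, hgne⟩ <;> rcases hg' with rfl | rfl | ⟨hg'M, hg'ne⟩
      · exact hgg' rfl
      · rcases Sym2.mem_iff.1 hzg with rfl | rfl <;> rcases Sym2.mem_iff.1 hzg' with rfl | rfl
        · exact huv rfl
        · exact huy' rfl
        · exact hvx' rfl
        · exact hxny rfl
      · rcases Sym2.mem_iff.1 hzg with rfl | rfl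
        · exact hu _ hg'M hzg'
        · exact hxonly _ hg'M hg'ne hzg'
      · rcases Sym2.mem_iff.1 hzg with rfl | rfl <;> rcases Sym2.mem_iff.1 hzg' with rfl | rfl
        · exact huv rfl
        · exact hvx' rfl
        · exact huy' rfl
        · exact hxny rfl
      · exact hgg' rfl
      · rcases Sym2.mem_iff.1 hzg with rfl | rfl
        · exact hv _ hg'M hzg'
        · exact hyonly _ hg'M hg'ne hzg'
      · rcases Sym2.mem_iff.1 hzg' with rfl | rfl
        · exact hu _ hgM hzg
        · exact hxonly _ hgM hgne hzg
      · rcases Sym2.mem_iff.1 hzg' with rfl | rfl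
        · exact hv _ hgM hzg
        · exact hyonly _ hgM hgne hzg
      · exact hM.2 g hgM g' hg'M hgg' z hzg hzg'
    exact key e (hmemM' e he) hze f (hmemM' f hf) hef hzf
  · rw [hM', Finset.card_insert_of_notMem huxne, Finset.card_insert_of_notMem hvyne,
      Finset.card_erase_of_mem hxy]
    have : 1 ≤ M.card := Finset.card_pos.2 ⟨_, hxy⟩
    omega

open Finset in
private theorem stmt_2_aux [Fintype V] (H : SimpleGraph V) (hH : H.CliqueFree 3)
    (M : Finset (Sym2 V)) (hM : IsMatchingSet H M)
    (hmax : ∀ M' : Finset (Sym2 V), IsMatchingSet H M' → M'.card ≤ M.card)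
    (hunmatched : 2 * M.card + 2 ≤ Fintype.card V) :
    Fintype.card V ≤ M.card + (sSup {n | ∃ u v : V, u ≠ v ∧ Nat.card {x : V // x ≠ u ∧ x ≠ v ∧ ¬H.Adj u x ∧ ¬H.Adj v x} = n}) + 2 := by
  classical
  set n := Fintype.card V with hn
  -- matched vertices
  set matched : Finset V := univ.filter (fun x => ∃ e ∈ M, x ∈ e) with hmatched
  have hedge2 : ∀ e : Sym2 V, (univ.filter (· ∈ e)).card ≤ 2 := by
    intro e
    induction e with
    | _ a b =>
      have hsub : univ.filter (· ∈ s(a,b)) ⊆ {a, b} := by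
        intro z hz
        simp only [mem_filter, Sym2.mem_iff] at hz
        simp [hz.2]
      exact (Finset.card_le_card hsub).trans ((Finset.card_insert_le _ _).trans (by simp))
  have hcardm : matched.card ≤ 2 * M.card := by
    have hsub : matched ⊆ M.biUnion (fun e => univ.filter (· ∈ e)) := by
      intro x hx
      simp only [hmatched, mem_filter, mem_univ, true_and] at hx
      obtain ⟨e, he, hxe⟩ := hx
      exact Finset.mem_biUnion.2 ⟨e, he, by simp [hxe]⟩
    calc matched.card ≤ (M.biUnion (fun e => univ.filter (· ∈ e))).card :=
          Finset.card_le_card hsub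
      _ ≤ ∑ e ∈ M, (univ.filter (· ∈ e)).card := Finset.card_biUnion_le
      _ ≤ ∑ _e ∈ M, 2 := Finset.sum_le_sum (fun e _ => hedge2 e)
      _ = 2 * M.card := by rw [Finset.sum_const, smul_eq_mul, mul_comm]
  -- two unmatched vertices
  have hUcard : 1 < (univ \ matched).card := by
    rw [Finset.card_sdiff_of_subset (Finset.subset_univ _), Finset.card_univ]
    omega
  obtain ⟨u, hu', v, hv', huv⟩ := Finset.one_lt_card.1 hUcard
  have hu : ∀ e ∈ M, u ∉ e := by
    intro e he hue
    have := Finset.mem_sdiff.1 hu'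
    exact this.2 (Finset.mem_filter.2 ⟨Finset.mem_univ _, e, he, hue⟩)
  have hv : ∀ e ∈ M, v ∉ e := by
    intro e he hve
    have := Finset.mem_sdiff.1 hv'
    exact this.2 (Finset.mem_filter.2 ⟨Finset.mem_univ _, e, he, hve⟩)
  have hext : ∀ {a b : V}, (∀ e ∈ M, a ∉ e) → (∀ e ∈ M, b ∉ e) → ¬H.Adj a b := by
    intro a b ha hb hadj
    obtain ⟨M', hM', hc⟩ := extend_matching H M hM ha hb hadj
    have := hmax M' hM'
    omega
  have huvadj : ¬H.Adj u v := hext hu hv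
  -- every neighbor of u or v is matched
  have hBmatched : ∀ x : V, H.Adj u x ∨ H.Adj v x → ∃ e ∈ M, x ∈ e := by
    intro x hx
    by_contra hcon
    push_neg at hcon
    rcases hx with hx | hx
    · exact hext hu hcon hx
    · exact hext hv hcon hx
  set B : Finset V := univ.filter (fun x => H.Adj u x ∨ H.Adj v x) with hB
  have hBcard : B.card ≤ M.card := by
    set f : V → Sym2 V := fun x => if h : ∃ e ∈ M, x ∈ e then h.choose else s(u,u) with hf
    have hfmem : ∀ x : V, (∃ e ∈ M, x ∈ e) → f x ∈ M ∧ x ∈ f x := by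
      intro x hx
      rw [hf]
      simp only [dif_pos hx]
      exact ⟨hx.choose_spec.1, hx.choose_spec.2⟩
    refine Finset.card_le_card_of_injOn f ?_ ?_
    · intro x hx
      have hx' := Finset.mem_filter.1 hx
      exact (hfmem x (hBmatched x hx'.2)).1
    · intro x hx y hy hfxy
      by_contra hne
      have hx' := (Finset.mem_filter.1 hx).2
      have hy' := (Finset.mem_filter.1 hy).2
      have hxm := hfmem x (hBmatched x hx')
      have hym := hfmem y (hBmatched y hy')
      have hxyM : s(x, y) ∈ M := by
        have : (f x : Sym2 V) = s(x, y) :=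
          (Sym2.mem_and_mem_iff hne).1 ⟨hxm.2, hfxy ▸ hym.2⟩
        exact this ▸ hxm.1
      have hxyadj : H.Adj x y := H.mem_edgeSet.1 (hM.1 _ hxyM)
      rcases hx' with hux | hvx <;> rcases hy' with huy | hvy
      · exact hH {u, x, y} (is3Clique_triple_iff.2 ⟨hux, huy, hxyadj⟩)
      · obtain ⟨M', hM', hc⟩ := swap_matching H M hM hu hv huv hxyM hux hvy
        have := hmax M' hM'; omega
      · obtain ⟨M', hM', hc⟩ :=
          swap_matching H M hM hu hv huv (Sym2.eq_swap ▸ hxyM : s(y,x) ∈ M) huy hvx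
        have := hmax M' hM'; omega
      · exact hH {v, x, y} (is3Clique_triple_iff.2 ⟨hvx, hvy, hxyadj⟩)
  set A : Finset V := univ.filter (fun x => x ≠ u ∧ x ≠ v ∧ ¬H.Adj u x ∧ ¬H.Adj v x) with hA
  have hAcard : Nat.card {x : V // x ≠ u ∧ x ≠ v ∧ ¬H.Adj u x ∧ ¬H.Adj v x} = A.card := by
    rw [Nat.card_eq_fintype_card, Fintype.card_subtype]
  have hcover : (univ : Finset V) ⊆ insert u (insert v (A ∪ B)) := by
    intro x _
    by_cases hxu : x = u
    · simp [hxu]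
    by_cases hxv : x = v
    · simp [hxv]
    by_cases hadj : H.Adj u x ∨ H.Adj v x
    · exact Finset.mem_insert.2 (Or.inr (Finset.mem_insert.2 (Or.inr
        (Finset.mem_union.2 (Or.inr (Finset.mem_filter.2 ⟨Finset.mem_univ _, hadj⟩))))))
    · push_neg at hadj
      exact Finset.mem_insert.2 (Or.inr (Finset.mem_insert.2 (Or.inr
        (Finset.mem_union.2 (Or.inl (Finset.mem_filter.2
          ⟨Finset.mem_univ _, hxu, hxv, hadj.1, hadj.2⟩))))))
  have hcount : n ≤ A.card + B.card + 2 := by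
    have h1 : n ≤ (insert u (insert v (A ∪ B))).card := by
      rw [hn, ← Finset.card_univ]
      exact Finset.card_le_card hcover
    have h2 : (insert u (insert v (A ∪ B))).card ≤ (A ∪ B).card + 2 :=
      (Finset.card_insert_le _ _).trans (by
        have := Finset.card_insert_le v (A ∪ B); omega)
    have h3 : (A ∪ B).card ≤ A.card + B.card := Finset.card_union_le _ _
    omega
  -- A.card ≤ sSup
  have hbdd : BddAbove {m | ∃ a b : V, a ≠ b ∧
      Nat.card {x : V // x ≠ a ∧ x ≠ b ∧ ¬H.Adj a x ∧ ¬H.Adj b x} = m} := by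
    refine ⟨Fintype.card V, ?_⟩
    rintro m ⟨a, b, -, rfl⟩
    rw [Nat.card_eq_fintype_card]
    exact Fintype.card_subtype_le _
  have hle : Nat.card {x : V // x ≠ u ∧ x ≠ v ∧ ¬H.Adj u x ∧ ¬H.Adj v x} ≤
      sSup {m | ∃ a b : V, a ≠ b ∧
        Nat.card {x : V // x ≠ a ∧ x ≠ b ∧ ¬H.Adj a x ∧ ¬H.Adj b x} = m} :=
    le_csSup hbdd ⟨u, v, huv, rfl⟩
  rw [hAcard] at hle
  omega

/-- If `H` is triangle-free, `M` is a maximum matching, and at least two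
vertices are left unmatched (`|V(H)| - 2·m(H) ≥ 2`), then `|V(H)| ≤ m(H) + macodeg(H) + 2`. -/
theorem stmt_2 [Fintype V] (H : SimpleGraph V) (hH : H.CliqueFree 3)
    (M : Finset (Sym2 V)) (hM : IsMatchingSet H M)
    (hmax : ∀ M' : Finset (Sym2 V), IsMatchingSet H M' → M'.card ≤ M.card)
    (hunmatched : 2 * M.card + 2 ≤ Fintype.card V) :
    Fintype.card V ≤ M.card + macodeg H + 2 := by
  have := stmt_2_aux H hH M hM hmax hunmatched
  unfold macodeg acodeg
  exact this
end

section
/- Equivalently stated in the complement: if H is a triangle-free graph, then the clique cover number of H is at most macodeg(H) + 2. -/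
/-! In a triangle-free graph every clique has at most two vertices, so a clique cover with the
minimum number `k` of classes is a maximum matching together with the unmatched vertices. Since
`acodeg u v = n - 2 - |N(u) ∪ N(v) \ {u, v}|`, it suffices to find `u ≠ v` whose joint
neighbourhood `N(u) ∪ N(v) \ {u, v}` has at most `n - k` vertices.

If two vertices `u, v` are unmatched, every vertex of their joint neighbourhood is matched (else the
matching could be augmented), and no matching edge meets it twice: that would give a triangle or an
augmenting path `u - z = w - v`. So the joint neighbourhood has at most `n - k` vertices.

Otherwise `k ≤ ⌈n / 2⌉`, and we use that every triangle-free graph has a pair whose joint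
neighbourhood has at most `n / 2` vertices. Two pairs with disjoint joint neighbourhoods can be
found along a 4-cycle, else along a 5-cycle, else along a path on four vertices; a triangle-free
graph without any of these is a disjoint union of stars, where two leaves have joint neighbourhood
of size at most two. -/

open SimpleGraph

variable {V : Type*}

open Finset Function

theorem not_adj_of_cliqueFree_three {H : SimpleGraph V} (hH : H.CliqueFree 3) {a b c : V}
    (hab : H.Adj a b) (hac : H.Adj a c) : ¬H.Adj b c :=
  fun hbc => by classical exact hH {a, b, c} (is3Clique_triple_iff.mpr ⟨hab, hac, hbc⟩)

section CliqueCover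

variable {ι : Type*}

def IsCliqueCover (H : SimpleGraph V) (c : V → ι) : Prop :=
  ∀ u v, c u = c v → u = v ∨ H.Adj u v

def IsSingletonClass (c : V → ι) (u : V) : Prop :=
  ∀ w, c w = c u → w = u

variable {H : SimpleGraph V} {c : V → ι}

theorem cliqueCoverNumber_le_card_image [Fintype V] [DecidableEq ι] (hc : IsCliqueCover H c) :
    cliqueCoverNumber H ≤ #(univ.image c) :=
  Nat.sInf_le ⟨fun x => (univ.image c).equivFin ⟨c x, mem_image_of_mem c (mem_univ x)⟩,
    fun u v huv => hc u v (by simpa using (univ.image c).equivFin.injective huv)⟩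

theorem exists_isCliqueCover_card_image_le [Fintype V] (H : SimpleGraph V) :
    ∃ c : V → Fin (cliqueCoverNumber H),
      IsCliqueCover H c ∧ #(univ.image c) ≤ cliqueCoverNumber H := by
  obtain ⟨c, hc⟩ := Nat.sInf_mem (s := {n | ∃ c : V → Fin n, IsCliqueCover H c})
    ⟨_, Fintype.equivFin V, fun u v h => Or.inl ((Fintype.equivFin V).injective h)⟩
  exact ⟨c, hc, (card_le_univ _).trans_eq (Fintype.card_fin _)⟩

theorem card_image_add_card_le [Fintype V] [DecidableEq V] [DecidableEq ι] (c : V → ι)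
    {S : Finset V} (hS : ∀ z ∈ S, ∃ w ∉ S, c w = c z) :
    #(univ.image c) + #S ≤ Fintype.card V := by
  have hsub : univ.image c ⊆ Sᶜ.image c := by
    intro i hi
    obtain ⟨z, -, rfl⟩ := mem_image.mp hi
    by_cases hz : z ∈ S
    · obtain ⟨w, hw, hwz⟩ := hS z hz
      exact mem_image.mpr ⟨w, mem_compl.mpr hw, hwz⟩
    · exact mem_image_of_mem c (mem_compl.mpr hz)
  have := (card_le_card hsub).trans card_image_le
  have := card_add_card_compl S
  omega

theorem two_mul_card_image_le [Fintype V] [DecidableEq ι]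
    (hsingle : ∀ u v, IsSingletonClass c u → IsSingletonClass c v → u = v) :
    2 * #(univ.image c) ≤ Fintype.card V + 1 := by
  classical
  set T := univ.filter (IsSingletonClass c)
  have hT : #T ≤ 1 := card_le_one.mpr fun u hu v hv =>
    hsingle u v (mem_filter.mp hu).2 (mem_filter.mp hv).2
  have hTc : 2 * #(Tᶜ.image c) ≤ #Tᶜ := by
    refine mul_card_image_le_card _ 2 fun i hi => ?_
    obtain ⟨x, hx, rfl⟩ := mem_image.mp hi
    obtain ⟨y, hyx, hy⟩ : ∃ y, c y = c x ∧ y ≠ x := by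
      simpa [T, IsSingletonClass] using hx
    refine one_lt_card.mpr ⟨x, ?_, y, ?_, hy.symm⟩
    · simp [hx]
    · simp only [T, IsSingletonClass, mem_compl, mem_filter, mem_univ, true_and, not_forall]
      exact ⟨⟨x, hyx.symm, hy.symm⟩, hyx⟩
  have hsplit : #(univ.image c) ≤ #(T.image c) + #(Tᶜ.image c) := by
    rw [← union_compl T, image_union]
    exact card_union_le _ _
  have := card_image_le (s := T) (f := c)
  have := card_add_card_compl T
  omega

theorem eq_or_eq_of_isCliqueCover (hH : H.CliqueFree 3) (hc : IsCliqueCover H c) {x y t : V}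
    (hxy : c x = c y) (hxt : c x = c t) (hne : x ≠ y) : t = x ∨ t = y := by
  by_contra! h
  exact not_adj_of_cliqueFree_three hH ((hc x y hxy).resolve_left hne)
    ((hc x t hxt).resolve_left h.1.symm) ((hc y t (hxy.symm.trans hxt)).resolve_left h.2.symm)

variable [DecidableEq V]

theorem isCliqueCover_update (hc : IsCliqueCover H c) {v w : V}
    (hv : IsSingletonClass c v) (hwv : H.Adj w v) :
    IsCliqueCover H (update c w (c v)) := by
  intro x y hxy
  by_cases hx : x = w <;> by_cases hy : y = w <;>
    simp only [update_apply, hx, hy, if_true, if_false] at hxy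
  · exact Or.inl (hx.trans hy.symm)
  · obtain rfl := hv y hxy.symm
    exact Or.inr (hx ▸ hwv)
  · obtain rfl := hv x hxy
    exact Or.inr (hy ▸ hwv.symm)
  · exact hc x y hxy

variable [Fintype V] [DecidableEq ι]

theorem not_adj_of_isSingletonClass (hc : IsCliqueCover H c)
    (hmin : #(univ.image c) ≤ cliqueCoverNumber H)
    {u z : V} (hu : IsSingletonClass c u) (hz : IsSingletonClass c z) : ¬H.Adj u z := by
  intro huz
  have hsub : univ.image (update c u (c z)) ⊆ (univ.image c).erase (c u) := by
    intro i hi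
    obtain ⟨x, -, rfl⟩ := mem_image.mp hi
    rcases eq_or_ne x u with rfl | hx
    · simpa using fun h => huz.ne (hu z h).symm
    · simpa [update_of_ne hx] using fun h => hx (hu x h)
  have hcard := card_le_card hsub
  rw [card_erase_of_mem (mem_image_of_mem c (mem_univ u))] at hcard
  have := card_pos.mpr ⟨_, mem_image_of_mem c (mem_univ u)⟩
  have := cliqueCoverNumber_le_card_image (isCliqueCover_update hc hz huz)
  omega

/-- There is no augmenting path `u - z = w - v` through a class `{z, w}` between two singleton
classes `{u}` and `{v}`: moving `w` to `v` leaves `{u}` and `{z}` as adjacent singletons. -/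
theorem not_adj_of_adj_of_isSingletonClass (hH : H.CliqueFree 3) (hc : IsCliqueCover H c)
    (hmin : #(univ.image c) ≤ cliqueCoverNumber H) {u v z w : V}
    (hu : IsSingletonClass c u) (hv : IsSingletonClass c v) (huv : u ≠ v)
    (hzw : c z = c w) (hne : z ≠ w) (huz : H.Adj u z) : ¬H.Adj v w := by
  intro hvw
  have hwu : w ≠ u := fun h => hne ((hu z (h ▸ hzw)).trans h.symm)
  have hvz : c v ≠ c z := fun h => hne ((hv z h.symm).trans (hv w (h.trans hzw).symm).symm)
  have hmin' : #(univ.image (update c w (c v))) ≤ cliqueCoverNumber H := by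
    refine (card_le_card fun i hi => ?_).trans hmin
    obtain ⟨x, -, rfl⟩ := mem_image.mp hi
    rcases eq_or_ne x w with rfl | hx
    · simp
    · simp [update_of_ne hx]
  refine not_adj_of_isSingletonClass (isCliqueCover_update hc hv hvw.symm) hmin' (fun x hx => ?_)
    (fun x hx => ?_) huz
  · rw [update_of_ne hwu.symm] at hx
    rcases eq_or_ne x w with rfl | hxw
    · exact absurd (hu v (by simpa using hx)) huv.symm
    · exact hu x (by simpa [update_of_ne hxw] using hx)
  · rw [update_of_ne hne] at hx
    rcases eq_or_ne x w with rfl | hxw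
    · exact absurd (by simpa using hx) hvz
    · have hx' : c z = c x := by simpa [update_of_ne hxw] using hx.symm
      exact (eq_or_eq_of_isCliqueCover hH hc hzw hx' hne).resolve_right hxw

end CliqueCover

theorem acodeg_le_macodeg [Finite V] {H : SimpleGraph V} {u v : V} (huv : u ≠ v) :
    acodeg H u v ≤ macodeg H :=
  le_csSup ⟨Nat.card V, by rintro _ ⟨a, b, -, rfl⟩; exact Finite.card_subtype_le _⟩
    ⟨u, v, huv, rfl⟩

theorem exists_ne_degree_le_one [Fintype V] {H : SimpleGraph V} [DecidableRel H.Adj]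
    (hP4 : ∀ a b c d, H.Adj a b → H.Adj b c → H.Adj c d → a = c ∨ b = d)
    (hn : 2 ≤ Fintype.card V) : ∃ y z, y ≠ z ∧ H.degree y ≤ 1 ∧ H.degree z ≤ 1 := by
  by_cases hstar : ∃ x v w, H.Adj x v ∧ H.Adj x w ∧ v ≠ w
  · obtain ⟨x, v, w, hxv, hxw, hvw⟩ := hstar
    have leaf : ∀ v w, H.Adj x v → H.Adj x w → v ≠ w → H.degree v ≤ 1 := by
      intro v w hxv hxw hvw
      have hN : ∀ t ∈ H.neighborFinset v, t = x := fun t ht =>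
        (hP4 t v x w ((mem_neighborFinset _ _ _).mp ht).symm hxv.symm hxw).resolve_right hvw
      rw [← card_neighborFinset_eq_degree, card_le_one]
      exact fun a ha b hb => (hN a ha).trans (hN b hb).symm
    exact ⟨v, w, hvw, leaf v w hxv hxw hvw, leaf w v hxw hxv hvw.symm⟩
  · push Not at hstar
    have hdeg : ∀ x, H.degree x ≤ 1 := fun x => by
      rw [← card_neighborFinset_eq_degree, card_le_one]
      exact fun a ha b hb => hstar x a b ((mem_neighborFinset _ _ _).mp ha)
        ((mem_neighborFinset _ _ _).mp hb)
    obtain ⟨y, z, hyz⟩ := Fintype.exists_pair_of_one_lt_card hn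
    exact ⟨y, z, hyz, hdeg y, hdeg z⟩

section PairNbhd

variable [Fintype V] [DecidableEq V] (H : SimpleGraph V) [DecidableRel H.Adj]

def pairNbhd (u v : V) : Finset V :=
  (H.neighborFinset u ∪ H.neighborFinset v) \ {u, v}

variable {H}

theorem mem_pairNbhd {u v x : V} :
    x ∈ pairNbhd H u v ↔ x ≠ u ∧ x ≠ v ∧ (H.Adj u x ∨ H.Adj v x) := by
  simp only [pairNbhd, mem_sdiff, mem_union, mem_neighborFinset, mem_insert, mem_singleton]
  tauto

theorem acodeg_add_card_pairNbhd {u v : V} (huv : u ≠ v) :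
    acodeg H u v + #(pairNbhd H u v) + 2 = Fintype.card V := by
  have hA : acodeg H u v = #({u, v}ᶜ \ (H.neighborFinset u ∪ H.neighborFinset v)) := by
    rw [acodeg, Nat.card_eq_fintype_card, Fintype.card_subtype]
    congr 1
    ext x
    simp only [mem_filter, mem_univ, true_and, mem_sdiff, mem_compl, mem_insert, mem_singleton,
      mem_union, mem_neighborFinset]
    tauto
  have hP : pairNbhd H u v = {u, v}ᶜ ∩ (H.neighborFinset u ∪ H.neighborFinset v) := by
    rw [pairNbhd, sdiff_eq_inter_compl, inter_comm]
  rw [hA, hP, card_sdiff_add_card_inter, card_compl, card_pair huv]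
  have := card_le_univ ({u, v} : Finset V)
  rw [card_pair huv] at this
  omega

theorem card_pairNbhd_le_degree_add (u v : V) : #(pairNbhd H u v) ≤ H.degree u + H.degree v :=
  (card_le_card sdiff_subset).trans (card_union_le _ _)

theorem disjoint_pairNbhd_of_cycle4 (hH : H.CliqueFree 3) {a b c d : V} (hab : H.Adj a b)
    (hbc : H.Adj b c) (hcd : H.Adj c d) (hda : H.Adj d a) :
    Disjoint (pairNbhd H a c) (pairNbhd H b d) := by
  refine disjoint_left.mpr fun z hz hz' => ?_
  obtain ⟨-, -, hz | hz⟩ := mem_pairNbhd.mp hz <;>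
    obtain ⟨-, -, hz' | hz'⟩ := mem_pairNbhd.mp hz'
  · exact not_adj_of_cliqueFree_three hH hab hz hz'
  · exact not_adj_of_cliqueFree_three hH hda.symm hz hz'
  · exact not_adj_of_cliqueFree_three hH hbc.symm hz hz'
  · exact not_adj_of_cliqueFree_three hH hcd hz hz'

theorem disjoint_pairNbhd_of_cycle5 (hH : H.CliqueFree 3)
    (hC4 : ∀ a b c d, H.Adj a b → H.Adj b c → H.Adj c d → H.Adj d a → a = c ∨ b = d)
    {a b c d e : V} (hab : H.Adj a b) (hbc : H.Adj b c) (hcd : H.Adj c d) (hde : H.Adj d e)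
    (hea : H.Adj e a) : Disjoint (pairNbhd H a b) (pairNbhd H c e) := by
  have hac : a ≠ c := by rintro rfl; exact not_adj_of_cliqueFree_three hH hcd.symm hde hea.symm
  have hbe : b ≠ e := by rintro rfl; exact not_adj_of_cliqueFree_three hH hbc.symm hcd hde.symm
  refine disjoint_left.mpr fun z hz hz' => ?_
  obtain ⟨hza, hzb, hz | hz⟩ := mem_pairNbhd.mp hz <;>
    obtain ⟨-, -, hz' | hz'⟩ := mem_pairNbhd.mp hz'
  · exact (hC4 z a b c hz.symm hab hbc hz').elim hzb hac
  · exact not_adj_of_cliqueFree_three hH hea hz' hz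
  · exact not_adj_of_cliqueFree_three hH hbc hz hz'
  · exact (hC4 z b a e hz.symm hab.symm hea.symm hz').elim hza hbe

theorem disjoint_pairNbhd_of_path4 (hH : H.CliqueFree 3)
    (hC4 : ∀ a b c d, H.Adj a b → H.Adj b c → H.Adj c d → H.Adj d a → a = c ∨ b = d)
    (hC5 : ∀ a b c d e, H.Adj a b → H.Adj b c → H.Adj c d → H.Adj d e → ¬H.Adj e a)
    {a b c d : V} (hab : H.Adj a b) (hbc : H.Adj b c) (hcd : H.Adj c d) (hac : a ≠ c)
    (hbd : b ≠ d) : Disjoint (pairNbhd H a b) (pairNbhd H c d) := by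
  refine disjoint_left.mpr fun z hz hz' => ?_
  obtain ⟨-, hzb, hz | hz⟩ := mem_pairNbhd.mp hz <;>
    obtain ⟨hzc, -, hz' | hz'⟩ := mem_pairNbhd.mp hz'
  · exact (hC4 z a b c hz.symm hab hbc hz').elim hzb hac
  · exact hC5 z a b c d hz.symm hab hbc hcd hz'
  · exact not_adj_of_cliqueFree_three hH hbc hz hz'
  · exact (hC4 z b c d hz.symm hbc hcd hz').elim hzc hbd

theorem exists_two_mul_card_pairNbhd_le (hH : H.CliqueFree 3) (hn : 2 ≤ Fintype.card V) :
    ∃ u v, u ≠ v ∧ 2 * #(pairNbhd H u v) ≤ Fintype.card V := by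
  by_contra! hbig
  have hmeet : ∀ a b c d, a ≠ b → c ≠ d →
      ¬Disjoint (pairNbhd H a b) (pairNbhd H c d) := by
    intro a b c d hab hcd hdisj
    have := card_union_of_disjoint hdisj ▸ card_le_univ (pairNbhd H a b ∪ pairNbhd H c d)
    have := hbig a b hab
    have := hbig c d hcd
    omega
  have hC4 : ∀ a b c d, H.Adj a b → H.Adj b c → H.Adj c d → H.Adj d a →
      a = c ∨ b = d := by
    intro a b c d hab hbc hcd hda
    by_contra! h
    exact hmeet a c b d h.1 h.2 (disjoint_pairNbhd_of_cycle4 hH hab hbc hcd hda)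
  have hC5 : ∀ a b c d e, H.Adj a b → H.Adj b c → H.Adj c d → H.Adj d e →
      ¬H.Adj e a := by
    intro a b c d e hab hbc hcd hde hea
    have hce : c ≠ e := by rintro rfl; exact not_adj_of_cliqueFree_three hH hab.symm hbc hea.symm
    exact hmeet a b c e hab.ne hce (disjoint_pairNbhd_of_cycle5 hH hC4 hab hbc hcd hde hea)
  have hP4 : ∀ a b c d, H.Adj a b → H.Adj b c → H.Adj c d → a = c ∨ b = d := by
    intro a b c d hab hbc hcd
    by_contra! h
    exact hmeet a b c d hab.ne hcd.ne (disjoint_pairNbhd_of_path4 hH hC4 hC5 hab hbc hcd h.1 h.2)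
  obtain ⟨y, z, hyz, hy, hz⟩ := exists_ne_degree_le_one hP4 hn
  have := card_pairNbhd_le_degree_add (H := H) y z
  have := acodeg_add_card_pairNbhd (H := H) hyz
  have := hbig y z hyz
  omega

theorem card_image_add_card_pairNbhd_le {ι : Type*} [DecidableEq ι] {c : V → ι}
    (hH : H.CliqueFree 3) (hc : IsCliqueCover H c) (hmin : #(univ.image c) ≤ cliqueCoverNumber H)
    {u v : V} (huv : u ≠ v) (hu : IsSingletonClass c u) (hv : IsSingletonClass c v) :
    #(univ.image c) + #(pairNbhd H u v) ≤ Fintype.card V := by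
  refine card_image_add_card_le c fun z hz => ?_
  obtain ⟨-, -, hadj⟩ := mem_pairNbhd.mp hz
  obtain ⟨w, hwz, hw⟩ : ∃ w, c w = c z ∧ w ≠ z := by
    by_contra! hz
    rcases hadj with h | h
    exacts [not_adj_of_isSingletonClass hc hmin hu hz h,
      not_adj_of_isSingletonClass hc hmin hv hz h]
  refine ⟨w, fun hw' => ?_, hwz⟩
  have hzw := (hc z w hwz.symm).resolve_left hw.symm
  obtain ⟨-, -, h'⟩ := mem_pairNbhd.mp hw'
  rcases hadj with h | h <;> rcases h' with h' | h'
  · exact not_adj_of_cliqueFree_three hH h h' hzw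
  · exact not_adj_of_adj_of_isSingletonClass hH hc hmin hu hv huv hwz.symm hw.symm h h'
  · exact not_adj_of_adj_of_isSingletonClass hH hc hmin hv hu huv.symm hwz.symm hw.symm h h'
  · exact not_adj_of_cliqueFree_three hH h h' hzw

end PairNbhd

/-- If `H` is triangle-free, then the clique cover number of `H` is at
most `macodeg(H) + 2`. -/
theorem stmt_6 [Fintype V] (H : SimpleGraph V) (hH : H.CliqueFree 3) :
    cliqueCoverNumber H ≤ macodeg H + 2 := by
  classical
  obtain ⟨c, hc, hmin⟩ := exists_isCliqueCover_card_image_le H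
  have hcover := cliqueCoverNumber_le_card_image hc
  rcases lt_or_ge (Fintype.card V) 2 with hn | hn
  · have : #(univ.image c) ≤ Fintype.card V := card_image_le.trans_eq card_univ
    omega
  obtain ⟨u, v, huv, hcard⟩ :
      ∃ u v, u ≠ v ∧ #(univ.image c) + #(pairNbhd H u v) ≤ Fintype.card V := by
    by_cases hsingle : ∃ u v, u ≠ v ∧ IsSingletonClass c u ∧ IsSingletonClass c v
    · obtain ⟨u, v, huv, hu, hv⟩ := hsingle
      exact ⟨u, v, huv, card_image_add_card_pairNbhd_le hH hc hmin huv hu hv⟩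
    · have hk := two_mul_card_image_le (c := c) fun u v hu hv => by
        by_contra huv
        exact hsingle ⟨u, v, huv, hu, hv⟩
      obtain ⟨u, v, huv, hP⟩ := exists_two_mul_card_pairNbhd_le hH hn
      exact ⟨u, v, huv, by omega⟩
  have := acodeg_add_card_pairNbhd (H := H) huv
  have := acodeg_le_macodeg (H := H) huv
  omega
end

section
/- If G is the line graph of a simple graph, then χ(G) ≤ Δ₂(G) + 3. -/
open SimpleGraph

variable {V : Type*}

/-!
By Vizing's theorem `G₀` has a proper edge colouring with `Δ(G₀) + 1` colours, and
a proper edge colouring of `G₀` is a proper vertex colouring of its line graph. Conversely, two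
edges `vz₁`, `vz₂` at a vertex `v` of maximum degree have the other `Δ(G₀) - 2` edges at `v` as
common neighbours in the line graph, so `Δ(G₀) + 1 ≤ Δ₂(L(G₀)) + 3`.

Vizing's theorem is proved by colouring the edges one at a time. To colour `xy`, take a maximal
fan `y = y₀, …, y_t` at `x`: the colour of `xyᵢ₊₁` is missing at `yᵢ`. If a colour missing at
`y_t` is also missing at `x`, moving the colour of each `xyᵢ₊₁` to `xyᵢ` frees `xy_t` for it.
Otherwise, with `α` missing at `x` and `β` missing at `y_t`, the `β`-edge at `x` goes to some
`y_j`, so `β` is also missing at `y_{j-1}`. The `α/β`-subgraph has maximum degree 2, so its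
components contain at most two vertices of degree at most 1, and `x`, `y_{j-1}`, `y_t` are not all
in one component; swapping `α` and `β` on a suitable component produces a fan of the first kind.
-/

theorem List.exists_maximal_nodup_isChain {α : Type*} [Fintype α] (R : α → α → Prop) (a : α)
    (l : List α) (hnd : (a :: l).Nodup) (hR : (a :: l).IsChain R) :
    ∃ l' : List α, (a :: l').Nodup ∧ (a :: l').IsChain R ∧
      ∀ b, R ((a :: l').getLast (cons_ne_nil a l')) b → b ∈ a :: l' := by
  by_cases h : ∃ b ∉ a :: l, R ((a :: l).getLast (cons_ne_nil a l)) b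
  · obtain ⟨b, hb, hRb⟩ := h
    have hnd' : (a :: l ++ [b]).Nodup :=
      nodup_append.2 ⟨hnd, nodup_singleton b, fun _ _ _ _ h => hb (by simp_all)⟩
    have hR' : (a :: l ++ [b]).IsChain R :=
      hR.append (isChain_singleton b) (by simp [getLast?_eq_some_getLast, hRb])
    have hlen : (a :: l ++ [b]).length ≤ Fintype.card α := hnd'.length_le_card
    exact exists_maximal_nodup_isChain R a (l ++ [b]) hnd' hR'
  · push Not at h
    exact ⟨l, hnd, hR, fun b hb => by_contra fun hbl => h b hbl hb⟩
termination_by Fintype.card α - l.length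
decreasing_by simp at hlen ⊢; omega

namespace SimpleGraph

open Finset

section DegreeTwo

variable [Fintype V] {H : SimpleGraph V} [DecidableRel H.Adj]

/-- A connected graph has at least `|V| - 1` edges, so by the handshake lemma the deficits
`2 - deg v` add up to at most `2`. -/
lemma Connected.card_degree_le_one_le_two (hH : H.Connected) (hdeg : ∀ v, H.degree v ≤ 2) :
    #{v | H.degree v ≤ 1} ≤ 2 := by
  have hedges : Fintype.card V ≤ #H.edgeFinset + 1 := by
    have := hH.card_vert_le_card_edgeSet_add_one
    rwa [Nat.card_eq_fintype_card, Nat.card_eq_fintype_card, ← edgeFinset_card] at this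
  have hsum : ∑ v, H.degree v + #{v | H.degree v ≤ 1} ≤ 2 * Fintype.card V := by
    rw [card_filter, ← sum_add_distrib, ← card_univ, mul_comm, ← smul_eq_mul, ← sum_const]
    refine sum_le_sum fun v _ => ?_
    have := hdeg v
    split_ifs <;> omega
  rw [sum_degrees_eq_twice_card_edges] at hsum
  omega

lemma Reachable.not_reachable_of_degree_le_one (hdeg : ∀ v, H.degree v ≤ 2) {a b c : V}
    (hab : a ≠ b) (hac : a ≠ c) (hbc : b ≠ c) (ha : H.degree a ≤ 1) (hb : H.degree b ≤ 1)
    (hc : H.degree c ≤ 1) (h : H.Reachable a b) : ¬H.Reachable a c := by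
  classical
  intro h'
  set C := H.connectedComponentMk a
  have hdegC (v : C) : C.toSimpleGraph.degree v = H.degree v := by
    convert degree_induce_of_neighborSet_subset (G := H) (s := C.supp) fun u hu =>
      (ConnectedComponent.connectedComponentMk_eq_of_adj hu).symm.trans v.2 <;> rfl
  have hmem {v : V} (hv : H.Reachable a v) : v ∈ C :=
    (ConnectedComponent.mem_supp_iff _ _).2 (ConnectedComponent.sound hv.symm)
  have hthree : ({⟨a, hmem (Reachable.refl a)⟩, ⟨b, hmem h⟩, ⟨c, hmem h'⟩} : Finset C) ⊆
      ({v | C.toSimpleGraph.degree v ≤ 1} : Finset C) := by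
    intro v hv
    simp only [mem_insert, mem_singleton] at hv
    rcases hv with rfl | rfl | rfl <;> simpa [hdegC]
  have := (card_le_card hthree).trans
    (C.connected_toSimpleGraph.card_degree_le_one_le_two fun v => (hdegC v).trans_le (hdeg v))
  rw [card_insert_of_notMem (by simp [hab, hac]), card_pair (by simpa using hbc)] at this
  omega

end DegreeTwo

section EdgeColoring

variable {G H : SimpleGraph V} {c : Sym2 V → ℕ} {n : ℕ} {v : V} {γ : ℕ}

def IsProperEdgeColoring (G : SimpleGraph V) (n : ℕ) (c : Sym2 V → ℕ) : Prop :=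
  (∀ e ∈ G.edgeSet, c e < n) ∧
    ∀ ⦃a b b' : V⦄, G.Adj a b → G.Adj a b' → b ≠ b' → c s(a, b) ≠ c s(a, b')

def IsMissingColor (G : SimpleGraph V) (c : Sym2 V → ℕ) (v : V) (γ : ℕ) : Prop :=
  ∀ ⦃u⦄, G.Adj v u → c s(v, u) ≠ γ

lemma IsProperEdgeColoring.mono (hc : G.IsProperEdgeColoring n c) (h : H ≤ G) :
    H.IsProperEdgeColoring n c :=
  ⟨fun e he => hc.1 e (edgeSet_mono h he), fun _ _ _ hb hb' => hc.2 (h hb) (h hb')⟩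

lemma IsMissingColor.mono (hG : G.IsMissingColor c v γ) (h : H ≤ G) : H.IsMissingColor c v γ :=
  fun _ hu => hG (h hu)

lemma IsProperEdgeColoring.card_neighbor_colored_le (hc : G.IsProperEdgeColoring n c)
    (v : V) [Fintype (G.neighborSet v)] (S : Finset ℕ) :
    #{u ∈ G.neighborFinset v | c s(v, u) ∈ S} ≤ #S :=
  card_le_card_of_injOn (fun u => c s(v, u)) (fun u hu => (mem_filter.1 hu).2)
    fun u hu u' hu' huu' => by
      by_contra hne
      simp only [coe_filter, mem_neighborFinset, Set.mem_ofPred_eq] at hu hu'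
      exact hc.2 hu.1 hu'.1 hne huu'

lemma exists_isMissingColor {k : ℕ} (v : V) [Fintype (G.neighborSet v)] (h : G.degree v ≤ k) :
    ∃ γ < k + 1, G.IsMissingColor c v γ := by
  obtain ⟨γ, hγ, hγc⟩ : ∃ γ ∈ range (k + 1), γ ∉ (G.neighborFinset v).image (c s(v, ·)) := by
    apply exists_mem_notMem_of_card_lt_card
    rw [card_range]
    exact Nat.lt_succ_of_le (card_image_le.trans h)
  exact ⟨γ, mem_range.1 hγ, fun u hu hcu =>
    hγc (mem_image.2 ⟨u, (mem_neighborFinset _ _ _).2 hu, hcu⟩)⟩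

theorem IsProperEdgeColoring.colorable_lineGraph (hc : G.IsProperEdgeColoring n c) :
    G.lineGraph.Colorable n := by
  refine ⟨Coloring.mk (fun e => ⟨c e, hc.1 e e.2⟩) fun {e f} hef heq => ?_⟩
  obtain ⟨hne, v, hve, hvf⟩ := lineGraph_adj_iff_exists.1 hef
  obtain ⟨b, hb⟩ := Sym2.mem_iff_exists.1 hve
  obtain ⟨b', hb'⟩ := Sym2.mem_iff_exists.1 hvf
  have hbb' : b ≠ b' := by
    rintro rfl
    exact hne (Subtype.ext (hb.trans hb'.symm))
  have hvb : G.Adj v b := by simpa [hb] using e.2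
  have hvb' : G.Adj v b' := by simpa [hb'] using f.2
  exact hc.2 hvb hvb' hbb' (by simpa [hb, hb'] using congrArg Fin.val heq)

end EdgeColoring

section Vizing

open scoped Classical

variable {G H : SimpleGraph V} {c : Sym2 V → ℕ} {n k : ℕ} {x y y' z v w a b : V} {α β γ : ℕ}
  {s Q : List V}

def kempeGraph (G : SimpleGraph V) (c : Sym2 V → ℕ) (α β : ℕ) : SimpleGraph V where
  Adj a b := G.Adj a b ∧ (c s(a, b) = α ∨ c s(a, b) = β)
  symm := ⟨fun a _ h => ⟨h.1.symm, Sym2.eq_swap (a := a) ▸ h.2⟩⟩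
  loopless := ⟨fun a h => G.loopless.irrefl a h.1⟩

/-- Swaps `α` and `β` on the Kempe chain through `w`. An edge with only one endpoint on the chain
is coloured neither `α` nor `β`, so leaving it alone is harmless. -/
noncomputable def kempeSwap (G : SimpleGraph V) (c : Sym2 V → ℕ) (α β : ℕ) (w : V) :
    Sym2 V → ℕ :=
  fun e => if ∀ v ∈ e, (G.kempeGraph c α β).Reachable w v then Equiv.swap α β (c e) else c e

lemma kempeSwap_eq (hab : G.Adj a b) : G.kempeSwap c α β w s(a, b) =
    if (G.kempeGraph c α β).Reachable w a then Equiv.swap α β (c s(a, b)) else c s(a, b) := by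
  by_cases hwa : (G.kempeGraph c α β).Reachable w a
  · by_cases hcol : c s(a, b) = α ∨ c s(a, b) = β
    · have hwb := hwa.trans (Adj.reachable ⟨hab, hcol⟩)
      simp [kempeSwap, hwa, hwb]
    · push Not at hcol
      simp [kempeSwap, Equiv.swap_apply_of_ne_of_ne hcol.1 hcol.2]
  · simp [kempeSwap, hwa]

lemma kempeSwap_of_not_reachable (hwa : ¬(G.kempeGraph c α β).Reachable w a) (b : V) :
    G.kempeSwap c α β w s(a, b) = c s(a, b) := by
  simp [kempeSwap, hwa]

lemma kempeSwap_of_ne (hab : G.Adj a b) (hα : c s(a, b) ≠ α) (hβ : c s(a, b) ≠ β) :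
    G.kempeSwap c α β w s(a, b) = c s(a, b) := by
  rw [kempeSwap_eq hab, Equiv.swap_apply_of_ne_of_ne hα hβ, ite_self]

lemma isMissingColor_kempeSwap_iff :
    G.IsMissingColor (G.kempeSwap c α β w) a γ ↔ G.IsMissingColor c a
      (if (G.kempeGraph c α β).Reachable w a then Equiv.swap α β γ else γ) := by
  refine forall₂_congr fun b hab => ?_
  rw [kempeSwap_eq hab]
  split_ifs
  · rw [not_iff_not, Equiv.swap_apply_eq_iff]
  · rfl

lemma IsProperEdgeColoring.kempeSwap (hc : G.IsProperEdgeColoring n c) (hα : α < n)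
    (hβ : β < n) : G.IsProperEdgeColoring n (G.kempeSwap c α β w) := by
  refine ⟨fun e he => ?_, fun a b b' hab hab' hbb' => ?_⟩
  · induction e with
    | _ a b =>
      rw [kempeSwap_eq he]
      split_ifs
      · rw [Equiv.swap_apply_def]
        split_ifs <;> first | assumption | exact hc.1 _ he
      · exact hc.1 _ he
  · rw [kempeSwap_eq hab, kempeSwap_eq hab']
    split_ifs
    · exact (Equiv.swap α β).injective.ne (hc.2 hab hab' hbb')
    · exact hc.2 hab hab' hbb'

/-- `b` may follow `a` in a Vizing fan at `x`. -/
def FanStep (G : SimpleGraph V) (c : Sym2 V → ℕ) (x a b : V) : Prop :=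
  G.Adj x b ∧ G.IsMissingColor c a (c s(x, b))

lemma IsProperEdgeColoring.update_of_isMissingColor
    (hc : (G.deleteEdges {s(x, y)}).IsProperEdgeColoring n c) (hγ : γ < n)
    (hx : (G.deleteEdges {s(x, y)}).IsMissingColor c x γ)
    (hy : (G.deleteEdges {s(x, y)}).IsMissingColor c y γ) :
    G.IsProperEdgeColoring n (Function.update c s(x, y) γ) := by
  have hH {a b : V} (hab : G.Adj a b) (hne : s(a, b) ≠ s(x, y)) :
      (G.deleteEdges {s(x, y)}).Adj a b := by simp [hab, hne]
  refine ⟨fun e he => ?_, fun a b b' hab hab' hbb' => ?_⟩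
  · rcases eq_or_ne e s(x, y) with rfl | hne
    · simpa
    · rw [Function.update_of_ne hne]
      exact hc.1 e (by simp [edgeSet_deleteEdges, he, hne])
  · have key {b b' : V} (hab' : G.Adj a b') (hbb' : b ≠ b') (he : s(a, b) = s(x, y)) :
        γ ≠ c s(a, b') := by
      have hne : s(a, b') ≠ s(x, y) := fun h => hbb' (Sym2.congr_right.1 (he.trans h.symm))
      rcases Sym2.eq_iff.1 he with ⟨rfl, rfl⟩ | ⟨rfl, rfl⟩
      · exact (hx (hH hab' hne)).symm
      · exact (hy (hH hab' hne)).symm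
    simp only [Function.update_apply]
    split_ifs with h1 h2 h2
    · exact absurd (Sym2.congr_right.1 (h1.trans h2.symm)) hbb'
    · exact key hab' hbb' h1
    · exact (key hab hbb'.symm h2).symm
    · exact hc.2 (hH hab h1) (hH hab' h2) hbb'

/-- Recolouring `xy` with the colour of `xy'` moves the uncoloured edge from `xy` to `xy'`. -/
lemma IsProperEdgeColoring.shift (hc : (G.deleteEdges {s(x, y)}).IsProperEdgeColoring n c)
    (hstep : (G.deleteEdges {s(x, y)}).FanStep c x y y') :
    (G.deleteEdges {s(x, y')}).IsProperEdgeColoring n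
      (Function.update c s(x, y) (c s(x, y'))) := by
  have hle : (G.deleteEdges {s(x, y')}).deleteEdges {s(x, y)} ≤ G.deleteEdges {s(x, y)} :=
    fun a b hab => by simp_all
  refine IsProperEdgeColoring.update_of_isMissingColor (hc.mono hle)
    (hc.1 _ hstep.1) (fun u hu => hc.2 (hle hu) hstep.1 ?_) (hstep.2.mono hle)
  rintro rfl
  simp at hu

lemma IsMissingColor.shift (hγ : (G.deleteEdges {s(x, y)}).IsMissingColor c v γ)
    (hstep : (G.deleteEdges {s(x, y)}).FanStep c x y y') (hv : v ≠ y) :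
    (G.deleteEdges {s(x, y')}).IsMissingColor (Function.update c s(x, y) (c s(x, y'))) v γ := by
  intro u hu
  by_cases he : s(v, u) = s(x, y)
  · obtain ⟨rfl, rfl⟩ : v = x ∧ u = y := by
      rcases Sym2.eq_iff.1 he with h | h
      · exact h
      · exact absurd h.1 hv
    rw [he, Function.update_self]
    exact hγ hstep.1
  · rw [Function.update_of_ne he]
    exact hγ (by simp_all)

theorem exists_isProperEdgeColoring_of_fan {l : List V} (hxy : G.Adj x y)
    (hc : (G.deleteEdges {s(x, y)}).IsProperEdgeColoring n c) (hnd : (y :: l).Nodup)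
    (hchain : (y :: l).IsChain ((G.deleteEdges {s(x, y)}).FanStep c x)) (hγ : γ < n)
    (hx : (G.deleteEdges {s(x, y)}).IsMissingColor c x γ)
    (hlast : (G.deleteEdges {s(x, y)}).IsMissingColor c
      ((y :: l).getLast (List.cons_ne_nil y l)) γ) :
    ∃ c', G.IsProperEdgeColoring n c' := by
  induction l generalizing y c with
  | nil => exact ⟨_, hc.update_of_isMissingColor hγ hx hlast⟩
  | cons y' l ih =>
    have hstep : (G.deleteEdges {s(x, y)}).FanStep c x y y' := hchain.rel
    have hyl : y ∉ y' :: l := (List.nodup_cons.1 hnd).1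
    have hnd' : (y' :: l).Nodup := (List.nodup_cons.1 hnd).2
    have hxy' : G.Adj x y' := (deleteEdges_adj.1 hstep.1).1
    refine ih hxy' (hc.shift hstep) hnd' (hchain.tail.imp_of_mem_tail_imp
      fun a b ha hb hab => ?_) (hx.shift hstep hxy.ne) ?_
    · have hby : b ≠ y := fun h => hyl (h ▸ List.mem_of_mem_tail hb)
      have hby' : b ≠ y' := fun h => (List.nodup_cons.1 hnd').1 (h ▸ hb)
      have hxb : G.Adj x b := (deleteEdges_adj.1 hab.1).1
      refine ⟨by simp [hxb, hxb.ne', hby'], ?_⟩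
      rw [Function.update_of_ne (by simp [hby, hxb.ne'])]
      exact hab.2.shift hstep fun h => hyl (h ▸ ha)
    · rw [List.getLast_cons (List.cons_ne_nil y' l)] at hlast
      exact hlast.shift hstep fun h => hyl (h ▸ List.getLast_mem _)

lemma adj_of_mem_of_isChain_fanStep :
    ∀ {y : V} {l : List V}, (y :: l).IsChain (H.FanStep c x) → v ∈ l → H.Adj x v
  | _, _ :: _, h, hv => by
    rcases List.mem_cons.1 hv with rfl | hv
    · exact h.rel.1
    · exact adj_of_mem_of_isChain_fanStep h.tail hv

lemma ne_of_mem_of_isChain_fanStep (hxy : G.Adj x y) {l : List V}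
    (hl : (y :: l).IsChain ((G.deleteEdges {s(x, y)}).FanStep c x)) (hv : v ∈ y :: l) : x ≠ v := by
  rcases List.mem_cons.1 hv with rfl | hv
  · exact hxy.ne
  · exact (adj_of_mem_of_isChain_fanStep hl hv).ne

lemma isChain_fanStep_kempeSwap (hc : H.IsProperEdgeColoring n c) (hαx : H.IsMissingColor c x α)
    (hxz : H.Adj x z) (hz : c s(x, z) = β) {l : List V} (hl : l.IsChain (H.FanStep c x))
    (hzl : z ∉ l.tail) : l.IsChain (H.FanStep (H.kempeSwap c α β w) x) := by
  refine hl.imp_of_mem_tail_imp fun a b _ hb hab => ⟨hab.1, ?_⟩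
  have hα : c s(x, b) ≠ α := hαx hab.1
  have hβ : c s(x, b) ≠ β := fun h => hc.2 hab.1 hxz (by rintro rfl; exact hzl hb) (h.trans hz.symm)
  rw [kempeSwap_of_ne hab.1 hα hβ, isMissingColor_kempeSwap_iff,
    Equiv.swap_apply_of_ne_of_ne hα hβ, ite_self]
  exact hab.2

variable [Fintype V]

lemma IsProperEdgeColoring.degree_kempeGraph_le (hc : G.IsProperEdgeColoring n c) (v : V)
    (S : Finset ℕ) (hS : ∀ u, (G.kempeGraph c α β).Adj v u → c s(v, u) ∈ S) :
    (G.kempeGraph c α β).degree v ≤ #S := by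
  rw [← card_neighborFinset_eq_degree]
  refine le_trans (card_le_card fun u hu => ?_) (hc.card_neighbor_colored_le v S)
  rw [mem_neighborFinset] at hu
  exact mem_filter.2 ⟨(mem_neighborFinset _ _ _).2 hu.1, hS u hu⟩

lemma IsProperEdgeColoring.degree_kempeGraph_le_two (hc : G.IsProperEdgeColoring n c)
    (v : V) : (G.kempeGraph c α β).degree v ≤ 2 :=
  (hc.degree_kempeGraph_le v {α, β} fun u hu => by simpa using hu.2).trans card_le_two

lemma IsProperEdgeColoring.degree_kempeGraph_le_one (hc : G.IsProperEdgeColoring n c)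
    (hv : G.IsMissingColor c v α ∨ G.IsMissingColor c v β) :
    (G.kempeGraph c α β).degree v ≤ 1 := by
  rcases hv with hv | hv
  · refine hc.degree_kempeGraph_le v {β} fun u hu => ?_
    simpa using hu.2.resolve_left (hv hu.1)
  · refine hc.degree_kempeGraph_le v {α} fun u hu => ?_
    simpa using hu.2.resolve_right (hv hu.1)

theorem exists_isProperEdgeColoring_of_fan_of_kempe (hxy : G.Adj x y)
    (hc : (G.deleteEdges {s(x, y)}).IsProperEdgeColoring (k + 1) c)
    (hnd : (y :: (s ++ z :: Q)).Nodup)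
    (hchain : (y :: (s ++ z :: Q)).IsChain ((G.deleteEdges {s(x, y)}).FanStep c x))
    (hα : α < k + 1) (hβ : β < k + 1) (hαx : (G.deleteEdges {s(x, y)}).IsMissingColor c x α)
    (hβt : (G.deleteEdges {s(x, y)}).IsMissingColor c
      ((z :: Q).getLast (List.cons_ne_nil z Q)) β)
    (hz : c s(x, z) = β) :
    ∃ c', G.IsProperEdgeColoring (k + 1) c' := by
  set H := G.deleteEdges {s(x, y)}
  set K := H.kempeGraph c α β
  set w := (y :: s).getLast (List.cons_ne_nil y s)
  set t := (z :: Q).getLast (List.cons_ne_nil z Q)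
  have hchain' : ((y :: s) ++ z :: Q).IsChain (H.FanStep c x) := hchain
  have hmem : w ∈ (y :: s) ++ z :: Q ∧ t ∈ (y :: s) ++ z :: Q :=
    ⟨List.mem_append_left _ (List.getLast_mem _), List.mem_append_right _ (List.getLast_mem _)⟩
  obtain ⟨hndP, hndZ, hdisj⟩ := List.nodup_append.1 (show ((y :: s) ++ z :: Q).Nodup from hnd)
  have hβw : H.IsMissingColor c w β :=
    hz ▸ (hchain'.rel_getLast_head_of_append (by simp) (by simp)).2
  have hxz : H.Adj x z := adj_of_mem_of_isChain_fanStep hchain (by simp)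
  have hchainP {w' : V} : (y :: s).IsChain (H.FanStep (H.kempeSwap c α β w') x) :=
    isChain_fanStep_kempeSwap hc hαx hxz hz hchain'.left_of_append fun h =>
      hdisj z (List.mem_of_mem_tail h) z List.mem_cons_self rfl
  by_cases hxw : K.Reachable x w
  · have hxt : ¬K.Reachable x t := hxw.not_reachable_of_degree_le_one
      (hc.degree_kempeGraph_le_two ·)
      (ne_of_mem_of_isChain_fanStep hxy hchain hmem.1)
      (ne_of_mem_of_isChain_fanStep hxy hchain hmem.2)
      (hdisj w (List.getLast_mem _) t (List.getLast_mem _))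
      (hc.degree_kempeGraph_le_one (.inl hαx)) (hc.degree_kempeGraph_le_one (.inr hβw))
      (hc.degree_kempeGraph_le_one (.inr hβt))
    have htx : ¬K.Reachable t x := fun h => hxt h.symm
    have htw : ¬K.Reachable t w := fun h => hxt (hxw.trans h.symm)
    refine exists_isProperEdgeColoring_of_fan hxy (hc.kempeSwap (w := t) hα hβ) hnd ?_ hα ?_ ?_
    · refine List.IsChain.append (l₁ := y :: s) hchainP
        (isChain_fanStep_kempeSwap hc hαx hxz hz hchain'.right_of_append
          (List.nodup_cons.1 hndZ).1) fun a ha b hb => ?_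
      obtain rfl : a = w := by simpa [List.getLast?_eq_some_getLast] using ha.symm
      obtain rfl : b = z := by simpa using hb.symm
      refine ⟨hxz, ?_⟩
      rw [kempeSwap_of_not_reachable htx, isMissingColor_kempeSwap_iff, if_neg htw, hz]
      exact hβw
    · rw [isMissingColor_kempeSwap_iff, if_neg htx]
      exact hαx
    · have hlast : (y :: (s ++ z :: Q)).getLast (List.cons_ne_nil _ _) = t := by simp [t]
      rw [hlast, isMissingColor_kempeSwap_iff, if_pos (Reachable.refl t), Equiv.swap_apply_left]
      exact hβt
  · refine exists_isProperEdgeColoring_of_fan hxy (hc.kempeSwap (w := x) hα hβ) hndP hchainP hβ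
      ?_ ?_
    · rw [isMissingColor_kempeSwap_iff, if_pos (Reachable.refl x), Equiv.swap_apply_right]
      exact hαx
    · rw [isMissingColor_kempeSwap_iff, if_neg hxw]
      exact hβw

theorem exists_isProperEdgeColoring_of_deleteEdges [DecidableRel G.Adj]
    (hdeg : ∀ v, G.degree v ≤ k) (hxy : G.Adj x y)
    (hc : (G.deleteEdges {s(x, y)}).IsProperEdgeColoring (k + 1) c) :
    ∃ c', G.IsProperEdgeColoring (k + 1) c' := by
  set H := G.deleteEdges {s(x, y)}
  obtain ⟨l, hnd, hchain, hmax⟩ := List.exists_maximal_nodup_isChain (H.FanStep c x) y []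
    (List.nodup_singleton y) (List.isChain_singleton y)
  have hdegH (v : V) : H.degree v ≤ k := (degree_le_of_le (deleteEdges_le _)).trans (hdeg v)
  obtain ⟨β, hβ, hβt⟩ := exists_isMissingColor (c := c) _ (hdegH ((y :: l).getLast (by simp)))
  obtain ⟨α, hα, hαx⟩ := exists_isMissingColor (c := c) x (hdegH x)
  by_cases hβx : H.IsMissingColor c x β
  · exact exists_isProperEdgeColoring_of_fan hxy hc hnd hchain hβ hβx hβt
  obtain ⟨z, hxz, hz⟩ : ∃ z, H.Adj x z ∧ c s(x, z) = β := by
    simpa only [IsMissingColor, not_forall, not_not, exists_prop] using hβx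
  have hzl : z ∈ l := (List.mem_cons.1 (hmax z ⟨hxz, hz ▸ hβt⟩)).resolve_left
    (by rintro rfl; simp [H] at hxz)
  obtain ⟨s, Q, rfl⟩ := List.append_of_mem hzl
  exact exists_isProperEdgeColoring_of_fan_of_kempe hxy hc hnd hchain hα hβ hαx
    (by simpa using hβt) hz

theorem exists_isProperEdgeColoring_of_degree_le (G : SimpleGraph V) [DecidableRel G.Adj]
    (hdeg : ∀ v, G.degree v ≤ k) : ∃ c, G.IsProperEdgeColoring (k + 1) c := by
  by_cases hE : ∃ x y, G.Adj x y
  · obtain ⟨x, y, hxy⟩ := hE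
    have hlt : G.deleteEdges {s(x, y)} < G :=
      lt_of_le_of_ne (deleteEdges_le _) fun h => by
        simpa using (h.symm ▸ hxy : (G.deleteEdges {s(x, y)}).Adj x y)
    have hcard : #(G.deleteEdges {s(x, y)}).edgeFinset < #G.edgeFinset :=
      card_lt_card (edgeFinset_ssubset_edgeFinset.2 hlt)
    obtain ⟨c, hc⟩ := exists_isProperEdgeColoring_of_degree_le (G.deleteEdges {s(x, y)})
      fun v => (degree_le_of_le hlt.le).trans (hdeg v)
    exact exists_isProperEdgeColoring_of_deleteEdges hdeg hxy hc
  · push Not at hE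
    exact ⟨fun _ => 0, fun e he => absurd he (by induction e; simpa using hE _ _),
      fun a b _ hab => absurd hab (hE a b)⟩
termination_by #G.edgeFinset

end Vizing

end SimpleGraph

open Finset

lemma codeg_le_maxCodeg [Finite V] (H : SimpleGraph V) {u v : V} (huv : u ≠ v) :
    codeg H u v ≤ maxCodeg H :=
  le_csSup ⟨Nat.card V, by
    rintro _ ⟨a, b, -, rfl⟩
    exact Nat.card_le_card_of_injective Subtype.val Subtype.val_injective⟩ ⟨u, v, huv, rfl⟩

lemma degree_sub_two_le_codeg_lineGraph [Fintype V] {G : SimpleGraph V} [DecidableRel G.Adj]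
    {v z₁ z₂ : V} (h₁ : G.Adj v z₁) (h₂ : G.Adj v z₂) (hne : z₁ ≠ z₂) :
    G.degree v - 2 ≤ codeg G.lineGraph ⟨s(v, z₁), h₁⟩ ⟨s(v, z₂), h₂⟩ := by
  classical
  have hadj {u z : V} (hz : G.Adj v z) (hu : G.Adj v u) (huz : u ≠ z) :
      G.lineGraph.Adj ⟨s(v, z), hz⟩ ⟨s(v, u), hu⟩ :=
    lineGraph_adj_iff_exists.2 ⟨fun h => huz (Sym2.congr_right.1 (congrArg Subtype.val h)).symm,
      v, Sym2.mem_mk_left _ _, Sym2.mem_mk_left _ _⟩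
  let f : (G.neighborFinset v \ {z₁, z₂} : Finset V) →
      {e : G.edgeSet // G.lineGraph.Adj ⟨s(v, z₁), h₁⟩ e ∧ G.lineGraph.Adj ⟨s(v, z₂), h₂⟩ e} :=
    fun u =>
      have hu : G.Adj v u ∧ u ≠ z₁ ∧ u ≠ z₂ := by
        have h := u.2
        simp only [mem_sdiff, mem_neighborFinset, mem_insert, mem_singleton, not_or] at h
        exact h
      ⟨⟨s(v, u), hu.1⟩, hadj h₁ hu.1 hu.2.1, hadj h₂ hu.1 hu.2.2⟩
  have hf : Function.Injective f := fun u u' h =>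
    Subtype.ext (Sym2.congr_right.1 (congrArg (fun e => (e.1 : Sym2 V)) h))
  calc G.degree v - 2 ≤ #(G.neighborFinset v \ {z₁, z₂}) := by
        simpa [card_neighborFinset_eq_degree, card_pair hne] using
          le_card_sdiff {z₁, z₂} (G.neighborFinset v)
    _ = Nat.card (G.neighborFinset v \ {z₁, z₂} : Finset V) := (Nat.card_eq_finsetCard _).symm
    _ ≤ codeg G.lineGraph ⟨s(v, z₁), h₁⟩ ⟨s(v, z₂), h₂⟩ := Nat.card_le_card_of_injective f hf

lemma maxDegree_le_maxCodeg_lineGraph_add_two [Fintype V] (G : SimpleGraph V)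
    [DecidableRel G.Adj] : G.maxDegree ≤ maxCodeg G.lineGraph + 2 := by
  refine maxDegree_le_of_forall_degree_le _ _ fun v => ?_
  by_cases hv : G.degree v ≤ 2
  · omega
  obtain ⟨z₁, hz₁, z₂, hz₂, hne⟩ :=
    one_lt_card.1 (by rw [card_neighborFinset_eq_degree]; omega : 1 < #(G.neighborFinset v))
  rw [mem_neighborFinset] at hz₁ hz₂
  have hcodeg := codeg_le_maxCodeg G.lineGraph (u := ⟨s(v, z₁), hz₁⟩) (v := ⟨s(v, z₂), hz₂⟩)
    fun h => hne (Sym2.congr_right.1 (congrArg Subtype.val h))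
  have := degree_sub_two_le_codeg_lineGraph hz₁ hz₂ hne
  omega

/-- If `G` is the line graph of a simple graph, then `χ(G) ≤ Δ₂(G) + 3`. -/
theorem stmt_10 [Fintype V] (G₀ : SimpleGraph V) :
    G₀.lineGraph.chromaticNumber ≤ ((maxCodeg G₀.lineGraph + 3 : ℕ) : ℕ∞) := by
  classical
  obtain ⟨c, hc⟩ := G₀.exists_isProperEdgeColoring_of_degree_le G₀.degree_le_maxDegree
  refine hc.colorable_lineGraph.chromaticNumber_le.trans (Nat.cast_le.2 ?_)
  have := maxDegree_le_maxCodeg_lineGraph_add_two G₀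
  omega
end

section
/- If a graph G contains two distinct vertices x, y with N(y) ⊆ N[x], then deg(y) ≤ Δ₂(G) + 1, and consequently χ(G) ≤ max(χ(G − y), Δ₂(G) + 2). -/
open SimpleGraph

variable {V : Type*}

/-- If `x ≠ y` and `N(y) ⊆ N[x]`, then `deg(y) ≤ Δ₂(G) + 1`, and
consequently `χ(G) ≤ max (χ(G − y)) (Δ₂(G) + 2)`. -/
theorem stmt_14 [Fintype V] [DecidableEq V] (G : SimpleGraph V) [DecidableRel G.Adj]
    (x y : V) (hxy : x ≠ y)
    (hdom : G.neighborSet y ⊆ insert x (G.neighborSet x)) :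
    G.degree y ≤ maxCodeg G + 1 ∧
      G.chromaticNumber ≤
        max ((G.induce ({y}ᶜ : Set V)).chromaticNumber) ((maxCodeg G + 2 : ℕ) : ℕ∞) := by
  classical
  -- Part 1: degree bound
  have hdeg : G.degree y ≤ maxCodeg G + 1 := by
    have hsub : G.neighborFinset y ⊆
        insert x (Finset.univ.filter (fun z => G.Adj x z ∧ G.Adj y z)) := by
      intro z hz
      rw [SimpleGraph.mem_neighborFinset] at hz
      rcases hdom hz with h | h
      · simp [h]
      · refine Finset.mem_insert_of_mem ?_
        simp only [Finset.mem_filter, Finset.mem_univ, true_and]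
        exact ⟨h, hz⟩
    have h1 : G.degree y ≤
        (Finset.univ.filter (fun z => G.Adj x z ∧ G.Adj y z)).card + 1 := by
      calc G.degree y = (G.neighborFinset y).card := rfl
        _ ≤ (insert x (Finset.univ.filter (fun z => G.Adj x z ∧ G.Adj y z))).card :=
            Finset.card_le_card hsub
        _ ≤ _ := Finset.card_insert_le _ _
    have hco : codeg G x y = (Finset.univ.filter (fun z => G.Adj x z ∧ G.Adj y z)).card := by
      rw [codeg, Nat.card_eq_fintype_card, Fintype.card_subtype]
    have hle : codeg G x y ≤ maxCodeg G := by
      apply le_csSup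
      · refine ⟨Fintype.card V, ?_⟩
        rintro n ⟨u, v, _, rfl⟩
        calc codeg G u v ≤ Nat.card V := by
              rw [codeg]; exact Nat.card_le_card_of_injective _ Subtype.val_injective
          _ = Fintype.card V := Nat.card_eq_fintype_card
      · exact ⟨x, y, hxy, rfl⟩
    omega
  refine ⟨hdeg, ?_⟩
  -- Part 2: chromatic number bound
  set H := G.induce ({y}ᶜ : Set V) with hH
  obtain hm := H.colorable_chromaticNumber_of_fintype
  set m := ENat.toNat H.chromaticNumber with hmdef
  have hHne : H.chromaticNumber ≠ ⊤ :=
    (lt_of_le_of_lt hm.chromaticNumber_le (WithTop.coe_lt_top m)).ne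
  set n := max m (maxCodeg G + 2) with hn
  have hCn : H.Colorable n := hm.mono (le_max_left _ _)
  obtain ⟨C⟩ := hCn
  have hnpos : 0 < n := lt_of_lt_of_le (by omega) (le_max_right _ _)
  haveI : Nonempty (Fin n) := ⟨⟨0, hnpos⟩⟩
  set g : V → Fin n := fun v =>
    if h : v ∈ ({y}ᶜ : Set V) then C ⟨v, h⟩ else Classical.arbitrary _ with hg
  set S := (G.neighborFinset y).image g with hS
  have hScard : S.card < n := by
    have h0 : S.card ≤ G.degree y := Finset.card_image_le
    have h2 : maxCodeg G + 2 ≤ n := le_max_right _ _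
    omega
  obtain ⟨c, hc⟩ : ∃ c : Fin n, c ∉ S := by
    by_contra h
    push_neg at h
    have h1 : (Finset.univ : Finset (Fin n)) ⊆ S := fun z _ => h z
    have h2 := Finset.card_le_card h1
    simp at h2
    omega
  set f : V → Fin n := fun v => if v = y then c else g v with hf
  have valid : ∀ {u v : V}, G.Adj u v → f u ≠ f v := by
    intro u v huv
    have huvne : u ≠ v := huv.ne
    by_cases hu : u = y
    · have hv : v ≠ y := fun h => huvne (hu.trans h.symm)
      have hvmem : g v ∈ S := by
        refine Finset.mem_image_of_mem g ?_
        rw [SimpleGraph.mem_neighborFinset]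
        exact hu ▸ huv
      simp only [hf, if_pos hu, if_neg hv]
      exact fun h => hc (h ▸ hvmem)
    · by_cases hv : v = y
      · have humem : g u ∈ S := by
          refine Finset.mem_image_of_mem g ?_
          rw [SimpleGraph.mem_neighborFinset]
          exact hv ▸ huv.symm
        simp only [hf, if_neg hu, if_pos hv]
        exact fun h => hc (h.symm ▸ humem)
      · have hu' : u ∈ ({y}ᶜ : Set V) := hu
        have hv' : v ∈ ({y}ᶜ : Set V) := hv
        simp only [hf, if_neg hu, if_neg hv, hg, dif_pos hu', dif_pos hv']
        exact C.valid huv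
  have hcol : G.Colorable n := ⟨SimpleGraph.Coloring.mk f valid⟩
  refine hcol.chromaticNumber_le.trans ?_
  rw [show H.chromaticNumber = (m : ℕ∞) from (ENat.coe_toNat hHne).symm, hn]
  norm_cast
end
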